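/- On ℍ^{m-1}×ℂ with coordinates z_i = x_i + i y_i, let ψ(z) = (y_1⋯y_{m-1})^{-1}. Then i∂\bar∂(ψ(z) + |z_m|²)/ψ(z) = α + β + γ, where α = i Σ_{i=1}^{m-1} dz_i∧d\bar{z}_i/(4y_i²), β = i(y_1⋯y_{m-1}) dz_m∧d\bar{z}_m, and γ = i Σ_{k,ℓ=1}^{m-1} dz_k∧d\bar{z}_ℓ/(4 y_k y_ℓ). -/

import Mathlib

/-!
For functions of `y = Im z` alone, `∂_k ∂̄_ℓ` is `¼ ∂²/∂y_k∂y_ℓ`. The Hessian of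
`ψ = ∏ yᵢ⁻¹` is `ψ · (δ_{kℓ}/y_k² + 1/(y_k y_ℓ))`, which after division by `ψ` gives `α + γ`,
while `∂_m ∂̄_m |z_m|² = 1` gives `β = (y₁⋯y_{m-1}) dz_m ∧ dz̄_m` after division by `ψ`.
-/

open Finset

/-- The Wirtinger derivative `∂_k f = (∂_{x_k} f - i ∂_{y_k} f)/2`. -/
noncomputable def wD {n : ℕ} (k : Fin (n + 1)) (f : (Fin (n + 1) → ℂ) → ℂ)
    (z : Fin (n + 1) → ℂ) : ℂ :=
  (fderiv ℝ f z (Pi.single k 1) - Complex.I * fderiv ℝ f z (Pi.single k Complex.I)) / 2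

/-- The conjugate Wirtinger derivative `∂_{\bar k} f = (∂_{x_k} f + i ∂_{y_k} f)/2`. -/
noncomputable def wDbar {n : ℕ} (k : Fin (n + 1)) (f : (Fin (n + 1) → ℂ) → ℂ)
    (z : Fin (n + 1) → ℂ) : ℂ :=
  (fderiv ℝ f z (Pi.single k 1) + Complex.I * fderiv ℝ f z (Pi.single k Complex.I)) / 2

/-- The coefficient matrix of the (1,1)-form `α + β + γ` on `ℍ^n × ℂ` (here `m = n+1`):
`α = iΣ dz_i∧d\bar z_i/(4y_i²)`, `β = i(y₁⋯y_n)dz_m∧d\bar z_m`,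
`γ = iΣ dz_k∧d\bar z_ℓ/(4y_k y_ℓ)`. -/
noncomputable def otCoeff {n : ℕ} (z : Fin (n + 1) → ℂ) (k ℓ : Fin (n + 1)) : ℂ :=
  if k = Fin.last n then
    (if ℓ = Fin.last n then ∏ i : Fin n, ((z i.castSucc).im : ℂ) else 0)
  else if ℓ = Fin.last n then 0
  else (if k = ℓ then 1 / (4 * ((z k).im : ℂ) ^ 2) else 0) +
    1 / (4 * ((z k).im : ℂ) * ((z ℓ).im : ℂ))



open Complex ComplexConjugate Filter Topology

section ProdInv
variable {𝕜 ι : Type*} [NontriviallyNormedField 𝕜] [Fintype ι] [DecidableEq ι]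

theorem fderiv_prod_apply_single (y : ι → 𝕜) (b : ι) :
    fderiv 𝕜 (fun y : ι → 𝕜 => ∏ i, y i) y (Pi.single b 1) = ∏ i ∈ univ.erase b, y i := by
  rw [(HasFDerivAt.finsetProd fun i _ => hasFDerivAt_apply i y).fderiv]
  simp [Pi.single_apply]

theorem fderiv_prod_inv_apply_single {y : ι → 𝕜} (hy : ∀ i, y i ≠ 0) (b : ι) :
    fderiv 𝕜 (fun y : ι → 𝕜 => (∏ i, y i)⁻¹) y (Pi.single b 1) = -(∏ i, y i)⁻¹ * (y b)⁻¹ := by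
  have hP : ∏ i, y i ≠ 0 := prod_ne_zero_iff.2 fun i _ => hy i
  have hprod : DifferentiableAt 𝕜 (fun y : ι → 𝕜 => ∏ i, y i) y := by fun_prop
  have h : HasFDerivAt (fun y : ι → 𝕜 => (∏ i, y i)⁻¹) _ y :=
    (hasFDerivAt_inv hP).comp y hprod.hasFDerivAt
  rw [h.fderiv]
  simp only [ContinuousLinearMap.comp_apply, fderiv_prod_apply_single,
    ContinuousLinearMap.toSpanSingleton_apply, smul_eq_mul]
  rw [← prod_erase_mul univ y (mem_univ b)] at hP ⊢
  field_simp [hy b]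

theorem fderiv_fderiv_prod_inv_apply_single {y : ι → 𝕜} (hy : ∀ i, y i ≠ 0) (a b : ι) :
    fderiv 𝕜 (fun y : ι → 𝕜 => fderiv 𝕜 (fun y : ι → 𝕜 => (∏ i, y i)⁻¹) y (Pi.single b 1)) y
        (Pi.single a 1) =
      (∏ i, y i)⁻¹ * ((if a = b then (y b ^ 2)⁻¹ else 0) + (y a * y b)⁻¹) := by
  have hnear : ∀ᶠ x in 𝓝 y, ∀ i, x i ≠ 0 :=
    eventually_all.2 fun i => (continuous_apply i).continuousAt.eventually_ne (hy i)
  have hfirst : (fun x : ι → 𝕜 => fderiv 𝕜 (fun y : ι → 𝕜 => (∏ i, y i)⁻¹) x (Pi.single b 1))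
      =ᶠ[𝓝 y] fun x => -(∏ i, x i)⁻¹ * (x b)⁻¹ := by
    filter_upwards [hnear] with x hx using fderiv_prod_inv_apply_single hx b
  have hinv : DifferentiableAt 𝕜 (fun y : ι → 𝕜 => (∏ i, y i)⁻¹) y := by
    fun_prop (disch := exact prod_ne_zero_iff.2 fun i _ => hy i)
  have hb : HasFDerivAt (fun x : ι → 𝕜 => (x b)⁻¹) _ y :=
    (hasFDerivAt_inv (hy b)).comp y (hasFDerivAt_apply b y)
  have h : HasFDerivAt (fun x : ι → 𝕜 => -(∏ i, x i)⁻¹ * (x b)⁻¹) _ y :=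
    hinv.hasFDerivAt.neg.mul hb
  rw [hfirst.fderiv_eq, h.fderiv]
  simp only [add_apply, smul_apply, neg_apply, ContinuousLinearMap.comp_apply, smul_eq_mul,
    Pi.neg_apply, fderiv_prod_inv_apply_single hy, ContinuousLinearMap.toSpanSingleton_apply,
    ContinuousLinearMap.proj_apply]
  have := hy a
  have := hy b
  by_cases hab : a = b
  · subst hab; simp only [Pi.single_eq_same, if_true]; field_simp
  · simp only [Pi.single_eq_of_ne (Ne.symm hab), if_neg hab]; field_simp; ring

end ProdInv

section Wirtinger
variable {n : ℕ} {f g : (Fin (n + 1) → ℂ) → ℂ} {z : Fin (n + 1) → ℂ}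

theorem Filter.EventuallyEq.wD_eq (h : f =ᶠ[𝓝 z] g) (k : Fin (n + 1)) : wD k f z = wD k g z := by
  simp only [wD, h.fderiv_eq]

theorem wD_add (hf : DifferentiableAt ℝ f z) (hg : DifferentiableAt ℝ g z) (k : Fin (n + 1)) :
    wD k (fun w => f w + g w) z = wD k f z + wD k g z := by
  simp only [wD, fderiv_fun_add hf hg, add_apply]
  ring

theorem wDbar_add (hf : DifferentiableAt ℝ f z) (hg : DifferentiableAt ℝ g z) (k : Fin (n + 1)) :
    wDbar k (fun w => f w + g w) z = wDbar k f z + wDbar k g z := by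
  simp only [wDbar, fderiv_fun_add hf hg, add_apply]
  ring

theorem ContDiffAt.wDbar {m : ℕ} (hf : ContDiffAt ℝ (m + 1) f z) (k : Fin (n + 1)) :
    ContDiffAt ℝ m (wDbar k f) z := by
  have hDf := hf.fderiv_right (m := m) le_rfl
  exact ((hDf.clm_apply contDiffAt_const).add
    (contDiffAt_const.mul (hDf.clm_apply contDiffAt_const))).div_const 2

theorem wD_wDbar_add (hf : ContDiffAt ℝ 2 f z) (hg : ContDiffAt ℝ 2 g z) (k ℓ : Fin (n + 1)) :
    wD k (fun w => wDbar ℓ (fun w => f w + g w) w) z =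
      wD k (fun w => wDbar ℓ f w) z + wD k (fun w => wDbar ℓ g w) z := by
  have hnear : (fun w => wDbar ℓ (fun w => f w + g w) w) =ᶠ[𝓝 z]
      fun w => wDbar ℓ f w + wDbar ℓ g w := by
    filter_upwards [hf.eventually (by simp), hg.eventually (by simp)] with w hfw hgw
    exact wDbar_add (hfw.differentiableAt (by simp)) (hgw.differentiableAt (by simp)) ℓ
  rw [hnear.wD_eq, wD_add ((hf.wDbar (m := 1) ℓ).differentiableAt one_ne_zero)
    ((hg.wDbar (m := 1) ℓ).differentiableAt one_ne_zero)]

end Wirtinger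

section Coordinates
variable {n : ℕ}

theorem wDbar_mul_conj (j ℓ : Fin (n + 1)) :
    wDbar ℓ (fun w => w j * conj (w j)) = fun w => if ℓ = j then w j else 0 := by
  funext w
  have h : HasFDerivAt (fun w : Fin (n + 1) → ℂ => w j * conj (w j)) _ w :=
    (hasFDerivAt_apply j w).mul ((conjCLE : ℂ →L[ℝ] ℂ).hasFDerivAt.comp w (hasFDerivAt_apply j w))
  rw [wDbar, h.fderiv]
  by_cases hℓ : ℓ = j
  · subst hℓ
    simp only [add_apply, smul_apply, ContinuousLinearMap.comp_apply,
      ContinuousLinearMap.proj_apply, Pi.single_eq_same, ContinuousLinearEquiv.coe_coe,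
      ContinuousAlgEquiv.coeCLE_apply, conjCAE_apply, map_one, smul_eq_mul, conj_I, if_true]
    linear_combination (conj (w ℓ) - w ℓ) / 2 * I_mul_I
  · simp [hℓ]

theorem wD_apply (j k : Fin (n + 1)) (z : Fin (n + 1) → ℂ) :
    wD k (fun w => w j) z = if k = j then 1 else 0 := by
  rw [wD, (hasFDerivAt_apply j z).fderiv]
  by_cases hk : k = j
  · subst hk; simp
  · simp [hk]

theorem wD_wDbar_mul_conj (j k ℓ : Fin (n + 1)) (z : Fin (n + 1) → ℂ) :
    wD k (fun w => wDbar ℓ (fun w => w j * conj (w j)) w) z = if k = j ∧ ℓ = j then 1 else 0 := by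
  rw [wDbar_mul_conj]
  by_cases hℓ : ℓ = j
  · simp [hℓ, wD_apply]
  · simp [hℓ, wD]

end Coordinates

section ImaginaryParts
variable {n : ℕ}

noncomputable def imInit (n : ℕ) : (Fin (n + 1) → ℂ) →L[ℝ] (Fin n → ℝ) :=
  ContinuousLinearMap.pi fun i => imCLM.comp (ContinuousLinearMap.proj i.castSucc)

@[simp]
theorem imInit_apply (w : Fin (n + 1) → ℂ) (i : Fin n) : imInit n w i = (w i.castSucc).im := rfl

theorem imInit_single_one (k : Fin (n + 1)) : imInit n (Pi.single k 1) = 0 := by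
  ext i
  by_cases h : i.castSucc = k
  · subst h; simp
  · simp [Pi.single_eq_of_ne h]

theorem imInit_single_castSucc_I (i : Fin n) :
    imInit n (Pi.single i.castSucc I) = Pi.single i 1 := by
  ext j
  by_cases h : j = i
  · subst h; simp
  · simp [h]

theorem imInit_single_last (c : ℂ) : imInit n (Pi.single (Fin.last n) c) = 0 := by
  ext j
  simp

variable {z : Fin (n + 1) → ℂ} {g : (Fin n → ℝ) → ℂ} {g' : (Fin n → ℝ) →L[ℝ] ℂ}

theorem wD_comp_imInit (hg : HasFDerivAt g g' (imInit n z)) (k : Fin (n + 1)) :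
    wD k (fun w => g (imInit n w)) z = -I / 2 * g' (imInit n (Pi.single k I)) := by
  have hc : HasFDerivAt (fun w => g (imInit n w)) _ z := hg.comp z (imInit n).hasFDerivAt
  rw [wD, hc.fderiv]
  simp only [ContinuousLinearMap.comp_apply, imInit_single_one, map_zero]
  ring

theorem wDbar_comp_imInit (hg : HasFDerivAt g g' (imInit n z)) (ℓ : Fin (n + 1)) :
    wDbar ℓ (fun w => g (imInit n w)) z = I / 2 * g' (imInit n (Pi.single ℓ I)) := by
  have hc : HasFDerivAt (fun w => g (imInit n w)) _ z := hg.comp z (imInit n).hasFDerivAt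
  rw [wDbar, hc.fderiv]
  simp only [ContinuousLinearMap.comp_apply, imInit_single_one, map_zero]
  ring

theorem wD_wDbar_ofReal_comp_imInit {h : (Fin n → ℝ) → ℝ} (hh : ContDiffAt ℝ 2 h (imInit n z))
    (k ℓ : Fin (n + 1)) :
    wD k (fun w => wDbar ℓ (fun w => (h (imInit n w) : ℂ)) w) z =
      ((fderiv ℝ (fun y => fderiv ℝ h y (imInit n (Pi.single ℓ I))) (imInit n z)
        (imInit n (Pi.single k I)) / 4 : ℝ) : ℂ) := by
  set e := imInit n (Pi.single ℓ I)
  have hnear : (fun w => wDbar ℓ (fun w => (h (imInit n w) : ℂ)) w) =ᶠ[𝓝 z]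
      fun w => I / 2 * ((fderiv ℝ h (imInit n w) e : ℝ) : ℂ) := by
    filter_upwards [((imInit n).continuous.tendsto z).eventually (hh.eventually (by simp))]
      with w hw
    exact wDbar_comp_imInit
      (ofRealCLM.hasFDerivAt.comp _ (hw.differentiableAt (by simp)).hasFDerivAt) ℓ
  have hD : DifferentiableAt ℝ (fun y => fderiv ℝ h y e) (imInit n z) :=
    ((hh.fderiv_right (m := 1) le_rfl).clm_apply contDiffAt_const).differentiableAt one_ne_zero
  have hG : HasFDerivAt (fun y => I / 2 * ((fderiv ℝ h y e : ℝ) : ℂ)) _ (imInit n z) :=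
    (ofRealCLM.hasFDerivAt.comp _ hD.hasFDerivAt).const_mul _
  rw [hnear.wD_eq, wD_comp_imInit hG]
  simp only [smul_apply, ContinuousLinearMap.comp_apply, ofRealCLM_apply, smul_eq_mul]
  push_cast
  linear_combination
    (-(fderiv ℝ (fun y => fderiv ℝ h y e) (imInit n z) (imInit n (Pi.single k I)) : ℂ) / 4) *
      I_mul_I

theorem wD_wDbar_ofReal_comp_imInit_add_mul_conj {h : (Fin n → ℝ) → ℝ}
    (hh : ContDiffAt ℝ 2 h (imInit n z)) (j k ℓ : Fin (n + 1)) :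
    wD k (fun w => wDbar ℓ (fun w => (h (imInit n w) : ℂ) + w j * conj (w j)) w) z =
      ((fderiv ℝ (fun y => fderiv ℝ h y (imInit n (Pi.single ℓ I))) (imInit n z)
        (imInit n (Pi.single k I)) / 4 : ℝ) : ℂ) + if k = j ∧ ℓ = j then 1 else 0 := by
  have hH : ContDiffAt ℝ 2 (fun w => (h (imInit n w) : ℂ)) z :=
    ofRealCLM.contDiff.contDiffAt.comp z (hh.comp z (imInit n).contDiff.contDiffAt)
  have hN : ContDiffAt ℝ 2 (fun w : Fin (n + 1) → ℂ => w j * conj (w j)) z :=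
    ((contDiff_apply ℝ ℂ j).mul
      ((conjCLE : ℂ →L[ℝ] ℂ).contDiff.comp (contDiff_apply ℝ ℂ j))).contDiffAt
  rw [wD_wDbar_add hH hN, wD_wDbar_ofReal_comp_imInit hh, wD_wDbar_mul_conj]

theorem otCoeff_eq_hessian_prod_inv_div (hz : ∀ i : Fin n, (z i.castSucc).im ≠ 0)
    (k ℓ : Fin (n + 1)) :
    otCoeff z k ℓ =
      (((fderiv ℝ (fun y => fderiv ℝ (fun y : Fin n → ℝ => (∏ i, y i)⁻¹) y
          (imInit n (Pi.single ℓ I))) (imInit n z) (imInit n (Pi.single k I)) / 4 : ℝ) : ℂ) +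
        if k = Fin.last n ∧ ℓ = Fin.last n then 1 else 0) /
      (((∏ i : Fin n, (z i.castSucc).im)⁻¹ : ℝ) : ℂ) := by
  have hz' : ∀ i : Fin n, ((z i.castSucc).im : ℂ) ≠ 0 := fun i => ofReal_ne_zero.2 (hz i)
  have hP : ∏ i : Fin n, ((z i.castSucc).im : ℂ) ≠ 0 := prod_ne_zero_iff.2 fun i _ => hz' i
  induction k using Fin.lastCases <;> induction ℓ using Fin.lastCases <;>
    simp [otCoeff, imInit_single_last, imInit_single_castSucc_I,
      fderiv_fderiv_prod_inv_apply_single (y := imInit n z) hz]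
  rename_i a b
  split_ifs with hab
  · subst hab; push_cast; field_simp [hz' a, hP]
  · push_cast; field_simp [hz' a, hz' b, hP]; ring

end ImaginaryParts

theorem ot_metric_ddbar_general (n : ℕ) :
    let ψ : (Fin (n + 1) → ℂ) → ℝ := fun z => (∏ i : Fin n, (z i.castSucc).im)⁻¹
    let u : (Fin (n + 1) → ℂ) → ℂ :=
      fun z => (ψ z : ℂ) + z (Fin.last n) * (starRingEnd ℂ) (z (Fin.last n))
    ∀ z : Fin (n + 1) → ℂ, (∀ i : Fin n, 0 < (z i.castSucc).im) →
      ∀ k ℓ : Fin (n + 1), wD k (fun w => wDbar ℓ u w) z / (ψ z : ℂ) = otCoeff z k ℓ := by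
  intro ψ u z hz k ℓ
  have hy : ∀ i : Fin n, imInit n z i ≠ 0 := fun i => (hz i).ne'
  have hψ : ContDiffAt ℝ 2 (fun y : Fin n → ℝ => (∏ i, y i)⁻¹) (imInit n z) := by
    fun_prop (disch := exact prod_ne_zero_iff.2 fun i _ => hy i)
  rw [otCoeff_eq_hessian_prod_inv_div hy, ← wD_wDbar_ofReal_comp_imInit_add_mul_conj hψ]
  rfl

/-- On `ℍ^n × ℂ` with `ψ(z) = (y₁⋯y_n)⁻¹`, the computation
`i∂∂̄(ψ + |z_m|²)/ψ = α + β + γ`, stated coefficientwise: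
`∂_k ∂_{\bar ℓ}(ψ + z_m \bar z_m)/ψ` equals the `(k,ℓ)`-coefficient of `α + β + γ`. -/
theorem ot_metric_ddbar (n : ℕ) (hn : 1 ≤ n) :
    let ψ : (Fin (n + 1) → ℂ) → ℝ := fun z => (∏ i : Fin n, (z i.castSucc).im)⁻¹
    let u : (Fin (n + 1) → ℂ) → ℂ :=
      fun z => (ψ z : ℂ) + z (Fin.last n) * (starRingEnd ℂ) (z (Fin.last n))
    ∀ z : Fin (n + 1) → ℂ, (∀ i : Fin n, 0 < (z i.castSucc).im) →
      ∀ k ℓ : Fin (n + 1), wD k (fun w => wDbar ℓ u w) z / (ψ z : ℂ) = otCoeff z k ℓ :=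
  ot_metric_ddbar_general n
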